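/- Fix a dimension d ≥ 1 and a locality radius δ > 0. For every ε > 0 there exists R such that for all r ≥ R the following holds: if G is any simple graph whose vertex set is (ℤ/rℤ)^d and whose edges only join pairs of vertices u, v with (∑_{i=1}^d dist(u_i, v_i)²)^{1/2} ≤ δ, where dist(a,b) = min(|a−b|, r−|a−b|) is the circular distance on ℤ/rℤ, then the algebraic connectivity of G satisfies λ2(L) ≤ ε. That is, local coupling on the hypertorus also has algebraic connectivity tending to 0 as the array size grows. -/

import Mathlib

open Matrix

open Classical in
/-- The Laplacian matrix of a simple graph: `L i i` is the degree of vertex `i`,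
`L i j = -1` if `i` and `j` are adjacent, and `L i j = 0` otherwise. -/
noncomputable def lap {V : Type*} [Fintype V] (G : SimpleGraph V) : Matrix V V ℝ :=
  Matrix.of fun i j =>
    if i = j then ({k | G.Adj i k}.ncard : ℝ) else if G.Adj i j then -1 else 0

/-- The algebraic connectivity `λ₂` : the second smallest eigenvalue of the Laplacian
(for at least 2 vertices), characterized as the minimum of `xᵀ L x` over real vectors
`x` with `∑ i, x i = 0` and `‖x‖ = 1`. -/
noncomputable def lambda2 {V : Type*} [Fintype V] (A : Matrix V V ℝ) : ℝ :=
  sInf {r : ℝ | ∃ x : V → ℝ, (∑ i, x i) = 0 ∧ (∑ i, (x i) ^ 2) = 1 ∧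
    r = x ⬝ᵥ A.mulVec x}

/-- The circular distance on `ℤ/rℤ` (modelled by `Fin r`):
`dist(a,b) = min(|a − b|, r − |a − b|)`. -/
noncomputable def circDist (r : ℕ) (a b : Fin r) : ℝ :=
  min |(a : ℝ) - (b : ℝ)| ((r : ℝ) - |(a : ℝ) - (b : ℝ)|)

/-! The test vector `x u = cos (2π u₀ / r)` has mean zero and `∑ x² = rᵈ / 2`. Adjacent vertices
are within `δ` of each other in every coordinate of the circular metric, so along an edge
`|x u - x v| ≤ 2πδ / r`, and every vertex has at most `(2⌈δ⌉ + 1)ᵈ` neighbours. The Rayleigh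
quotient of `x`, which bounds `λ₂` from above, is therefore at most
`(2⌈δ⌉ + 1)ᵈ (2πδ)² / r² → 0`. -/

open Finset Filter

section Laplacian

variable {V : Type*} [Fintype V] (G : SimpleGraph V)

theorem lap_eq_lapMatrix [DecidableEq V] [DecidableRel G.Adj] : lap G = G.lapMatrix ℝ := by
  ext i j
  by_cases h : i = j
  · subst h
    simp [lap, SimpleGraph.lapMatrix, SimpleGraph.degMatrix,
      ← SimpleGraph.card_neighborSet_eq_degree, Set.ncard_eq_toFinset_card']
  · simp only [lap, of_apply, h, ↓reduceIte, SimpleGraph.lapMatrix, SimpleGraph.degMatrix,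
      Matrix.sub_apply, ne_eq, not_false_eq_true, diagonal_apply_ne, SimpleGraph.adjMatrix_apply, zero_sub]
    split_ifs <;> simp

theorem dotProduct_lap_mulVec [DecidableRel G.Adj] (x : V → ℝ) :
    x ⬝ᵥ lap G *ᵥ x = (∑ u, ∑ v, if G.Adj u v then (x u - x v) ^ 2 else 0) / 2 := by
  classical
  rw [lap_eq_lapMatrix, ← toLinearMap₂'_apply', SimpleGraph.lapMatrix_toLinearMap₂']

theorem dotProduct_lap_mulVec_nonneg (x : V → ℝ) : 0 ≤ x ⬝ᵥ lap G *ᵥ x := by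
  classical
  simpa [lap_eq_lapMatrix] using (G.posSemidef_lapMatrix ℝ).dotProduct_mulVec_nonneg x

theorem lambda2_lap_le_div {x : V → ℝ} (hx₀ : ∑ u, x u = 0) (hx : x ≠ 0) :
    lambda2 (lap G) ≤ x ⬝ᵥ lap G *ᵥ x / ∑ u, x u ^ 2 := by
  have hpos : 0 < ∑ u, x u ^ 2 := by
    obtain ⟨u, hu⟩ := Function.ne_iff.mp hx
    exact sum_pos' (fun v _ => sq_nonneg (x v)) ⟨u, mem_univ u, sq_pos_of_ne_zero hu⟩
  set c := (Real.sqrt (∑ u, x u ^ 2))⁻¹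
  have hc : c ^ 2 = (∑ u, x u ^ 2)⁻¹ := by rw [inv_pow, Real.sq_sqrt hpos.le]
  refine csInf_le ⟨0, ?_⟩ ⟨c • x, ?_, ?_, ?_⟩
  · rintro _ ⟨y, -, -, rfl⟩
    exact dotProduct_lap_mulVec_nonneg G y
  · simp [← mul_sum, hx₀]
  · simp [mul_pow, ← mul_sum, hc, hpos.ne']
  · rw [mulVec_smul, dotProduct_smul, smul_dotProduct, smul_smul, smul_eq_mul, ← sq, hc,
      div_eq_inv_mul]

theorem dotProduct_lap_mulVec_le [DecidableRel G.Adj] {x : V → ℝ} {D : ℕ} {L : ℝ}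
    (hdeg : ∀ u, G.degree u ≤ D) (hL : ∀ u v, G.Adj u v → |x u - x v| ≤ L) :
    x ⬝ᵥ lap G *ᵥ x ≤ Fintype.card V * D * L ^ 2 / 2 := by
  rw [dotProduct_lap_mulVec]
  gcongr
  have hrow : ∀ u, (∑ v, if G.Adj u v then (x u - x v) ^ 2 else 0) ≤ D * L ^ 2 := fun u =>
    calc (∑ v, if G.Adj u v then (x u - x v) ^ 2 else 0)
        ≤ ∑ v, if G.Adj u v then L ^ 2 else 0 := by
          gcongr with v
          split_ifs with huv
          · exact sq_le_sq' (abs_le.mp (hL u v huv)).1 (abs_le.mp (hL u v huv)).2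
          · rfl
      _ = G.degree u * L ^ 2 := by
          rw [← sum_filter, sum_const, nsmul_eq_mul, ← G.card_neighborFinset_eq_degree,
            G.neighborFinset_eq_filter]
      _ ≤ D * L ^ 2 := by gcongr; exact_mod_cast hdeg u
  calc (∑ u, ∑ v, if G.Adj u v then (x u - x v) ^ 2 else 0)
      ≤ ∑ _u : V, (D * L ^ 2 : ℝ) := sum_le_sum fun u _ => hrow u
    _ = Fintype.card V * D * L ^ 2 := by rw [sum_const, card_univ, nsmul_eq_mul]; ring

end Laplacian

theorem Fintype.card_smul_sum_comp_eval {ι α M : Type*} [Fintype ι] [DecidableEq ι] [Fintype α]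
    [AddCommMonoid M] (i : ι) (f : α → M) :
    Fintype.card α • ∑ u : ι → α, f (u i) = Fintype.card (ι → α) • ∑ a, f a := by
  let e := Equiv.piSplitAt i fun _ => α
  rw [Fintype.sum_equiv e (fun u => f (u i)) (fun p => f p.1) fun _ => rfl]
  simp only [Fintype.sum_prod_type_right, sum_const, card_univ]
  rw [Fintype.card_congr e, Fintype.card_prod, smul_smul, mul_comm]

section Torus

open Real

theorem sum_cos_two_pi_mul_div_eq_zero {r k : ℕ} (hk : ¬ r ∣ k) :
    ∑ a : Fin r, cos (2 * π * k * a / r) = 0 := by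
  rcases Nat.eq_zero_or_pos r with rfl | hr
  · simp
  have hr' : (r : ℝ) ≠ 0 := by positivity
  have hsin : sin (2 * π * k / r / 2) ≠ 0 := by
    rw [Ne, Real.sin_eq_zero_iff]
    rintro ⟨n, hn⟩
    refine hk (Int.natCast_dvd_natCast.mp ⟨n, ?_⟩)
    have : (k : ℝ) = r * n := by
      field_simp at hn
      nlinarith [pi_pos]
    exact_mod_cast this
  have h := Real.sin_mul_sum_cos r (2 * π * k / r) 0
  rw [show r * (2 * π * k / r) / 2 = k * π by field_simp, sin_nat_mul_pi, zero_mul] at h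
  rw [Fin.sum_univ_eq_sum_range (fun a : ℕ => cos (2 * π * k * a / r))]
  convert (mul_eq_zero.mp h).resolve_left hsin using 3 with a
  ring_nf

theorem sum_cos_sq_two_pi_div {r : ℕ} (hr : 2 < r) :
    ∑ a : Fin r, cos (2 * π * a / r) ^ 2 = r / 2 := by
  have h := sum_cos_two_pi_mul_div_eq_zero (Nat.not_dvd_of_pos_of_lt two_pos hr)
  push_cast at h
  simp_rw [cos_sq, sum_add_distrib, ← sum_div]
  rw [show ∑ a : Fin r, cos (2 * (2 * π * a / r)) = ∑ a : Fin r, cos (2 * π * 2 * a / r) by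
    exact sum_congr rfl fun a _ => by ring_nf, h]
  simp

theorem abs_cos_sub_cos_le_int_mul {r : ℝ} (hr : 0 < r) (x y : ℝ) (n : ℤ) :
    |cos (2 * π * x / r) - cos (2 * π * y / r)| ≤ 2 * π / r * |x - y - n * r| :=
  calc |cos (2 * π * x / r) - cos (2 * π * y / r)|
      = |cos (2 * π * x / r - n * (2 * π)) - cos (2 * π * y / r)| := by
        rw [cos_sub_int_mul_two_pi]
    _ ≤ |2 * π * x / r - n * (2 * π) - 2 * π * y / r| := abs_cos_sub_cos_le _ _
    _ = 2 * π / r * |x - y - n * r| := by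
        rw [← abs_of_pos (by positivity : 0 < 2 * π / r), ← abs_mul]
        congr 1
        field_simp
        ring

theorem abs_cos_sub_cos_le_circDist {r : ℕ} (a b : Fin r) :
    |cos (2 * π * a / r) - cos (2 * π * b / r)| ≤ 2 * π / r * circDist r a b := by
  have hr : (0 : ℝ) < r := by exact_mod_cast a.pos
  unfold circDist
  rcases le_total |(a : ℝ) - b| (r - |(a : ℝ) - b|) with h | h
  · simpa [min_eq_left h] using abs_cos_sub_cos_le_int_mul hr a b 0
  rw [min_eq_right h]
  rcases le_total (b : ℝ) a with hab | hab
  · convert abs_cos_sub_cos_le_int_mul hr a b 1 using 2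
    have : (a : ℝ) < r := by exact_mod_cast a.isLt
    push_cast
    rw [abs_of_nonneg (sub_nonneg.2 hab), abs_of_nonpos (by linarith)]
    ring
  · convert abs_cos_sub_cos_le_int_mul hr a b (-1) using 2
    have : (b : ℝ) < r := by exact_mod_cast b.isLt
    push_cast
    rw [abs_of_nonpos (sub_nonpos.2 hab), abs_of_nonneg (by linarith)]
    ring

theorem circDist_eq_min_sub {r : ℕ} (a b : Fin r) :
    circDist r a b = min ((b - a : Fin r) : ℝ) (r - ((b - a : Fin r) : ℝ)) := by
  unfold circDist
  rcases le_or_gt a b with hab | hab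
  · rw [Fin.coe_sub_iff_le.mpr hab, abs_sub_comm, abs_of_nonneg (by simpa using hab)]
    push_cast [Fin.le_iff_val_le_val.mp hab]
    rfl
  · have hle : (a : ℕ) ≤ r + b := by have := a.isLt; omega
    rw [Fin.coe_sub_iff_lt.mpr hab, abs_of_nonneg (by simpa using hab.le), min_comm,
      Nat.cast_sub hle]
    push_cast
    congr 1 <;> ring

variable {r : ℕ} [NeZero r]

theorem card_filter_circDist_le (a : Fin r) (δ : ℝ) :
    #{b | circDist r a b ≤ δ} ≤ 2 * ⌈δ⌉₊ + 1 := by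
  set m := ⌈δ⌉₊
  have hmaps : ∀ b ∈ ({b | circDist r a b ≤ δ} : Finset (Fin r)),
      ((b - a : Fin r) : ℕ) ∈ range (m + 1) ∪ Ico (r - m) r := by
    intro b hb
    have hδ : min ((b - a : Fin r) : ℝ) (r - ((b - a : Fin r) : ℝ)) ≤ m :=
      circDist_eq_min_sub a b ▸ (mem_filter.mp hb).2.trans (Nat.le_ceil δ)
    rcases min_le_iff.mp hδ with h | h
    · exact mem_union_left _ (mem_range.mpr (Nat.lt_succ_of_le (by exact_mod_cast h)))
    · have : r ≤ ((b - a : Fin r) : ℕ) + m := by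
        exact_mod_cast (by linarith : (r : ℝ) ≤ ((b - a : Fin r) : ℕ) + m)
      exact mem_union_right _ (mem_Ico.mpr ⟨by omega, (b - a).isLt⟩)
  calc #{b | circDist r a b ≤ δ}
      ≤ #(range (m + 1) ∪ Ico (r - m) r) :=
        card_le_card_of_injOn _ hmaps fun b _ b' _ h => sub_left_injective (Fin.ext h)
    _ ≤ 2 * m + 1 := (card_union_le _ _).trans (by simp; omega)

theorem degree_le_of_forall_circDist_le {ι : Type*} [Fintype ι] [DecidableEq ι] {δ : ℝ}
    (G : SimpleGraph (ι → Fin r)) [DecidableRel G.Adj]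
    (hG : ∀ u v, G.Adj u v → ∀ i, circDist r (u i) (v i) ≤ δ) (u : ι → Fin r) :
    G.degree u ≤ (2 * ⌈δ⌉₊ + 1) ^ Fintype.card ι :=
  calc G.degree u = #(G.neighborFinset u) := (G.card_neighborFinset_eq_degree u).symm
    _ ≤ #(Fintype.piFinset fun i => ({b | circDist r (u i) b ≤ δ} : Finset (Fin r))) :=
        card_le_card fun v hv => Fintype.mem_piFinset.mpr fun i =>
          mem_filter.mpr ⟨mem_univ _, hG u v ((G.mem_neighborFinset u v).mp hv) i⟩
    _ = ∏ i, #{b | circDist r (u i) b ≤ δ} := Fintype.card_piFinset _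
    _ ≤ ∏ _i : ι, (2 * ⌈δ⌉₊ + 1) := prod_le_prod' fun i _ => card_filter_circDist_le (u i) δ
    _ = (2 * ⌈δ⌉₊ + 1) ^ Fintype.card ι := by rw [prod_const, card_univ]

end Torus

open Real in
theorem lambda2_lap_le_of_forall_circDist_le {d r : ℕ} (hd : 1 ≤ d) (hr : 2 < r) {δ : ℝ}
    (G : SimpleGraph (Fin d → Fin r))
    (hG : ∀ u v, G.Adj u v → ∀ i, circDist r (u i) (v i) ≤ δ) :
    lambda2 (lap G) ≤ (2 * ⌈δ⌉₊ + 1) ^ d * (2 * π * δ) ^ 2 / r ^ 2 := by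
  classical
  have : NeZero r := ⟨by omega⟩
  have hr₀ : (0 : ℝ) < r := by positivity
  let i₀ : Fin d := ⟨0, hd⟩
  let x : (Fin d → Fin r) → ℝ := fun u => cos (2 * π * u i₀ / r)
  have hsum : ∑ u, x u = 0 := by
    have h := Fintype.card_smul_sum_comp_eval i₀ fun a : Fin r => cos (2 * π * a / r)
    have h1 := sum_cos_two_pi_mul_div_eq_zero (k := 1) (Nat.not_dvd_of_pos_of_lt one_pos hr.le)
    simp only [Nat.cast_one, mul_one] at h1
    rw [h1, smul_zero, smul_eq_zero] at h
    exact h.resolve_left (NeZero.ne _)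
  set n : ℝ := (Fintype.card (Fin d → Fin r) : ℝ)
  have hn : 0 < n := by positivity
  have hsq : ∑ u, x u ^ 2 = n / 2 := by
    have h := Fintype.card_smul_sum_comp_eval i₀ fun a : Fin r => cos (2 * π * a / r) ^ 2
    rw [sum_cos_sq_two_pi_div hr, nsmul_eq_mul, nsmul_eq_mul, Fintype.card_fin] at h
    field_simp at h ⊢
    linarith
  have hx : x ≠ 0 := fun h => by simp [h] at hsq; linarith
  have hL : ∀ u v, G.Adj u v → |x u - x v| ≤ 2 * π / r * δ := fun u v huv =>
    (abs_cos_sub_cos_le_circDist _ _).trans (by gcongr; exact hG u v huv i₀)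
  have hdeg := degree_le_of_forall_circDist_le G hG
  rw [Fintype.card_fin] at hdeg
  calc lambda2 (lap G) ≤ x ⬝ᵥ lap G *ᵥ x / ∑ u, x u ^ 2 := lambda2_lap_le_div G hsum hx
    _ ≤ n * ↑((2 * ⌈δ⌉₊ + 1) ^ d) * (2 * π / r * δ) ^ 2 / 2 / (n / 2) := by
        rw [hsq]
        gcongr
        exact dotProduct_lap_mulVec_le G hdeg hL
    _ = (2 * ⌈δ⌉₊ + 1) ^ d * (2 * π * δ) ^ 2 / r ^ 2 := by
        field_simp
        push_cast
        ring

theorem lambda2_local_torus_tendsto_zero_general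
    (d : ℕ) (hd : 1 ≤ d) (δ : ℝ) :
    ∀ ε : ℝ, 0 < ε → ∃ R : ℕ, ∀ r : ℕ, R ≤ r →
      ∀ G : SimpleGraph (Fin d → Fin r),
        (∀ u v, G.Adj u v →
          Real.sqrt (∑ i, circDist r (u i) (v i) ^ 2) ≤ δ) →
        lambda2 (lap G) ≤ ε := by
  intro ε hε
  set C : ℝ := (2 * ⌈δ⌉₊ + 1) ^ d * (2 * Real.pi * δ) ^ 2
  have hlim : Tendsto (fun r : ℕ => C / (r : ℝ) ^ 2) atTop (nhds 0) :=
    tendsto_const_nhds.div_atTop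
      ((tendsto_pow_atTop two_ne_zero).comp tendsto_natCast_atTop_atTop)
  obtain ⟨R, hR⟩ := eventually_atTop.mp (hlim.eventually (ge_mem_nhds hε))
  refine ⟨max 3 R, fun r hr G hG => ?_⟩
  have hcoord : ∀ u v, G.Adj u v → ∀ i, circDist r (u i) (v i) ≤ δ := fun u v huv i =>
    (le_abs_self _).trans <| (Real.abs_le_sqrt <|
      single_le_sum (fun j _ => sq_nonneg (circDist r (u j) (v j))) (mem_univ i)).trans (hG u v huv)
  exact (lambda2_lap_le_of_forall_circDist_le hd (by omega) G hcoord).trans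
    (hR r (le_of_max_le_right hr))

/-- Local coupling on the hypertorus `(ℤ/rℤ)^d` (every edge joins vertices `u, v` with
`(∑ i, dist(u i, v i)²)^{1/2} ≤ δ` in the circular metric) has algebraic connectivity
tending to `0` as the array size grows: for fixed `d ≥ 1` and `δ > 0`, for every
`ε > 0` there is an `R` such that for all `r ≥ R`, every such graph `G` has
`λ₂(L(G)) ≤ ε`. -/
theorem lambda2_local_torus_tendsto_zero
    (d : ℕ) (hd : 1 ≤ d) (δ : ℝ) (hδ : 0 < δ) :
    ∀ ε : ℝ, 0 < ε → ∃ R : ℕ, ∀ r : ℕ, R ≤ r →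
      ∀ G : SimpleGraph (Fin d → Fin r),
        (∀ u v, G.Adj u v →
          Real.sqrt (∑ i, circDist r (u i) (v i) ^ 2) ≤ δ) →
        lambda2 (lap G) ≤ ε :=
  lambda2_local_torus_tendsto_zero_general d hd δ
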